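/- arXiv:1811.06178 — 3 statements merged into one kernel-verified Lean document; each statement's English description precedes it below -/
import Mathlib

section
/- Let n ≥ 1 and let x, y, d ∈ [n] satisfy y > x + d and x > d. Then the 10-element set {x−d, x, x+d, x+2d, y−d, y, y+d, d, y−x−d, y−x} is 2-Schur-Ramsey: for every 2-colouring of this set there exist elements a, b, c of the set, all of the same colour, with a + b = c. -/
/-!
Writing `A = y - x - d` and `B = y - x`, the set contains the twelve Schur triples
`d + (x - d) = x`, `d + x = x + d`, `d + (x + d) = x + 2d`, `d + (y - d) = y`, `d + y = y + d`,
`A + d = B`, `A + x = y - d`, `A + (x + d) = y`, `A + (x + 2d) = y + d`,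
`B + (x - d) = y - d`, `B + x = y`, `B + (x + d) = y + d`,
and no 2-colouring of ten points avoids all of them. Say `d` is red. Then the two progressions
`x - d, …, x + 2d` and `y - d, y, y + d` have no two consecutive red terms, and `A`, `B` are not
both red. If `A` is blue, each of the pairs `(x, y - d)`, `(x + d, y)`, `(x + 2d, y + d)` has a
red member; splitting on the colour of `x` then forces enough colours that either colour of `B`
completes one of its three triples. If `A` is red, then `B` is blue and each of the pairs
`(x - d, y - d)`, `(x, y)`, `(x + d, y + d)` has a red member; splitting on `x` again yields a
red triple through `A`.
-/

section

variable {M : Type*} [Add M]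

def IsSchurRamsey (S : Set M) : Prop :=
  ∀ f : M → Bool, ∃ a ∈ S, ∃ b ∈ S, ∃ c ∈ S, f a = f b ∧ f b = f c ∧ a + b = c

theorem IsSchurRamsey.mono {S T : Set M} (hS : IsSchurRamsey S)
    (hST : S ⊆ T) : IsSchurRamsey T := fun f => by
  obtain ⟨a, ha, b, hb, c, hc, h⟩ := hS f
  exact ⟨a, hST ha, b, hST hb, c, hST hc, h⟩

/-- The index pattern of the twelve triples above, for the enumeration
`x - d, x, x + d, x + 2d, y - d, y, y + d, d, A, B` of the set. -/
def schurTriples : List (Fin 10 × Fin 10 × Fin 10) :=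
  [(7, 0, 1), (7, 1, 2), (7, 2, 3), (7, 4, 5), (7, 5, 6), (8, 7, 9),
   (8, 1, 4), (8, 2, 5), (8, 3, 6), (9, 0, 4), (9, 1, 5), (9, 2, 6)]

theorem exists_mem_schurTriples_monochromatic (c : Fin 10 → Bool) :
    ∃ t ∈ schurTriples, c t.1 = c t.2.1 ∧ c t.2.1 = c t.2.2 := by
  revert c
  decide +kernel

theorem isSchurRamsey_range_of_schurTriples (e : Fin 10 → M)
    (he : ∀ t ∈ schurTriples, e t.1 + e t.2.1 = e t.2.2) : IsSchurRamsey (Set.range e) := by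
  intro f
  obtain ⟨t, ht, h⟩ := exists_mem_schurTriples_monochromatic (f ∘ e)
  exact ⟨e t.1, ⟨_, rfl⟩, e t.2.1, ⟨_, rfl⟩, e t.2.2, ⟨_, rfl⟩, h.1, h.2, he t ht⟩

end

theorem stmt_0_general (x y d : ℕ)
    (hyxd : y > x + d) (hxd : x > d)
    (f : ℕ → Bool) :
    ∃ a ∈ ({x - d, x, x + d, x + 2*d, y - d, y, y + d, d, y - x - d, y - x} : Finset ℕ),
    ∃ b ∈ ({x - d, x, x + d, x + 2*d, y - d, y, y + d, d, y - x - d, y - x} : Finset ℕ),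
    ∃ c ∈ ({x - d, x, x + d, x + 2*d, y - d, y, y + d, d, y - x - d, y - x} : Finset ℕ),
      f a = f b ∧ f b = f c ∧ a + b = c := by
  have hS := isSchurRamsey_range_of_schurTriples
    ![x - d, x, x + d, x + 2*d, y - d, y, y + d, d, y - x - d, y - x]
    (by simp [schurTriples]; omega)
  refine hS.mono (T := ((_ : Finset ℕ) : Set ℕ)) ?_ f
  rintro _ ⟨i, rfl⟩
  fin_cases i <;> simp

/-- the 10-element set {x−d, x, x+d, x+2d, y−d, y, y+d, d, y−x−d, y−x}
is 2-Schur-Ramsey. -/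
theorem stmt_0 (n x y d : ℕ) (hn : 1 ≤ n)
    (hx : x ∈ Finset.Icc 1 n) (hy : y ∈ Finset.Icc 1 n) (hd : d ∈ Finset.Icc 1 n)
    (hyxd : y > x + d) (hxd : x > d)
    (f : ℕ → Bool) :
    ∃ a ∈ ({x - d, x, x + d, x + 2*d, y - d, y, y + d, d, y - x - d, y - x} : Finset ℕ),
    ∃ b ∈ ({x - d, x, x + d, x + 2*d, y - d, y, y + d, d, y - x - d, y - x} : Finset ℕ),
    ∃ c ∈ ({x - d, x, x + d, x + 2*d, y - d, y, y + d, d, y - x - d, y - x} : Finset ℕ),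
      f a = f b ∧ f b = f c ∧ a + b = c :=
  stmt_0_general x y d hyxd hxd f
end

section
/- Suppose A ⊆ [n], ε > 0, and there are at least ε·n values d ∈ [n] such that A contains at least ε·n 4APs with common difference d. Then the number of triples (d, s−d, s) of positive integers such that d lies in D_ε(A) and s = y − x where (x−d, x, x+d, x+2d) and (y−d, y, y+d) arise from two distinct 4APs of A with common difference d (as described) is at least ε²n²/4, provided n is sufficiently large. In particular, A determines at least ε²n²/4 distinct Schur triples of the form (d, s−d, s). -/
/-!
Fix a popular difference `d` and let `a` be the smallest first term of a 4AP of `A` with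
difference `d`. Every other first term `b` gives the pair `(d, b - a + d)`, and distinct `b`
give distinct pairs, so `d` contributes at least `εn - 1` pairs. Summing over the at least `εn`
popular differences gives `εn (εn - 1)` pairs, which is at least `ε²n²/2` once `εn ≥ 2`.
-/

/-- `x, x+d, x+2d, x+3d` all lie in `A`. -/
def is4AP (A : Finset ℕ) (x d : ℕ) : Prop :=
  x ∈ A ∧ x + d ∈ A ∧ x + 2 * d ∈ A ∧ x + 3 * d ∈ A

open Classical in
/-- Number of 4APs in `A` with common difference `d`. -/
noncomputable def ap4Count (n : ℕ) (A : Finset ℕ) (d : ℕ) : ℕ :=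
  ((Finset.Icc 1 n).filter (fun x => is4AP A x d)).card

open Classical in
/-- Popular common differences. -/
noncomputable def popularDiffs (n : ℕ) (A : Finset ℕ) (ε : ℝ) : Finset ℕ :=
  (Finset.Icc 1 n).filter (fun d => ε * n ≤ (ap4Count n A d : ℝ))

open Classical in
/-- The pairs `(d, s)` encoding the Schur triples `(d, s−d, s)`:
`d` is a popular difference and `s = (b − a) + d` where `a < b` are first terms of two
distinct 4APs of `A` with common difference `d`. -/
noncomputable def schurPairs (n : ℕ) (A : Finset ℕ) (ε : ℝ) : Finset (ℕ × ℕ) :=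
  ((Finset.Icc 1 n) ×ˢ (Finset.Icc 1 (2 * n))).filter
    (fun t => t.1 ∈ popularDiffs n A ε ∧
      ∃ a ∈ Finset.Icc 1 n, ∃ b ∈ Finset.Icc 1 n, a < b ∧
        is4AP A a t.1 ∧ is4AP A b t.1 ∧ t.2 = (b - a) + t.1)

open Finset

open Classical in
noncomputable def ap4Starts (n : ℕ) (A : Finset ℕ) (d : ℕ) : Finset ℕ :=
  (Icc 1 n).filter (fun x => is4AP A x d)

section

variable {n : ℕ} {A : Finset ℕ} {ε : ℝ}

theorem le_card_ap4Starts_of_mem_popularDiffs {d : ℕ} (hd : d ∈ popularDiffs n A ε) :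
    ε * n ≤ #(ap4Starts n A d) := by
  classical
  simp only [popularDiffs, mem_filter] at hd
  exact hd.2

theorem mem_ap4Starts {x d : ℕ} : x ∈ ap4Starts n A d ↔ x ∈ Icc 1 n ∧ is4AP A x d := by
  classical
  simp only [ap4Starts, mem_filter]

theorem mem_schurPairs_of_lt {d a b : ℕ} (hd : d ∈ popularDiffs n A ε)
    (ha : a ∈ ap4Starts n A d) (hb : b ∈ ap4Starts n A d) (hab : a < b) :
    (d, b - a + d) ∈ schurPairs n A ε := by
  classical
  rw [mem_ap4Starts] at ha hb
  have hd' : d ∈ Icc 1 n := (mem_filter.mp hd).1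
  simp only [schurPairs, mem_filter, mem_product, mem_Icc] at hd' ha hb ⊢
  exact ⟨⟨hd', by omega, by omega⟩, hd, a, ha.1, b, hb.1, hab, ha.2, hb.2, rfl⟩

theorem fst_le_snd_of_mem_schurPairs {t : ℕ × ℕ} (ht : t ∈ schurPairs n A ε) : t.1 ≤ t.2 := by
  classical
  simp only [schurPairs, mem_filter] at ht
  obtain ⟨-, -, a, -, b, -, -, -, -, hs⟩ := ht
  omega

theorem fst_mem_popularDiffs_of_mem_schurPairs {t : ℕ × ℕ} (ht : t ∈ schurPairs n A ε) :
    t.1 ∈ popularDiffs n A ε := by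
  classical
  simp only [schurPairs, mem_filter] at ht
  exact ht.2.1

theorem card_ap4Starts_le_card_fiber_add_one {d : ℕ} (hd : d ∈ popularDiffs n A ε) :
    #(ap4Starts n A d) ≤ #{t ∈ schurPairs n A ε | t.1 = d} + 1 := by
  classical
  set X := ap4Starts n A d
  rcases X.eq_empty_or_nonempty with hX | hX
  · simp [hX]
  set a := X.min' hX
  have hinj : Set.InjOn (fun b => (d, b - a + d)) (X.erase a) := by
    intro b hb c hc hbc
    have hab := X.min'_le b (mem_of_mem_erase hb)
    have hac := X.min'_le c (mem_of_mem_erase hc)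
    simp only [Prod.mk.injEq, true_and] at hbc
    omega
  have hsub : (X.erase a).image (fun b => (d, b - a + d)) ⊆ {t ∈ schurPairs n A ε | t.1 = d} := by
    intro t ht
    obtain ⟨b, hb, rfl⟩ := mem_image.mp ht
    have hab : a < b :=
      lt_of_le_of_ne (X.min'_le b (mem_of_mem_erase hb)) (ne_of_mem_erase hb).symm
    exact mem_filter.mpr ⟨mem_schurPairs_of_lt hd (X.min'_mem hX) (mem_of_mem_erase hb) hab, rfl⟩
  have := card_le_card hsub
  rw [card_image_of_injOn hinj, card_erase_of_mem (X.min'_mem hX)] at this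
  omega

theorem card_popularDiffs_mul_le_card_schurPairs :
    (#(popularDiffs n A ε) : ℝ) * (ε * n - 1) ≤ #(schurPairs n A ε) := by
  classical
  have hfibers := card_eq_sum_card_fiberwise (f := Prod.fst) (t := popularDiffs n A ε)
    (fun t ht => fst_mem_popularDiffs_of_mem_schurPairs ht)
  have hper : ∀ d ∈ popularDiffs n A ε,
      ε * n - 1 ≤ (#{t ∈ schurPairs n A ε | t.1 = d} : ℝ) := by
    intro d hd
    have hcount := le_card_ap4Starts_of_mem_popularDiffs hd
    have : (#(ap4Starts n A d) : ℝ) ≤ #{t ∈ schurPairs n A ε | t.1 = d} + 1 := by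
      exact_mod_cast card_ap4Starts_le_card_fiber_add_one hd
    linarith
  calc (#(popularDiffs n A ε) : ℝ) * (ε * n - 1)
      = ∑ _d ∈ popularDiffs n A ε, (ε * n - 1) := by rw [sum_const, nsmul_eq_mul]
    _ ≤ ∑ d ∈ popularDiffs n A ε, (#{t ∈ schurPairs n A ε | t.1 = d} : ℝ) := sum_le_sum hper
    _ = #(schurPairs n A ε) := by rw [hfibers]; push_cast; rfl

end

/-- at least `ε²n²/4` Schur triples `(d, s−d, s)` arise from pairs of
4APs of `A` with popular common difference. -/
theorem stmt_8 (ε : ℝ) (hε : 0 < ε) :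
    ∃ n₀ : ℕ, ∀ n : ℕ, n₀ ≤ n → ∀ A ⊆ Finset.Icc 1 n,
      ε * n ≤ ((popularDiffs n A ε).card : ℝ) →
      ε ^ 2 * n ^ 2 / 4 ≤ ((schurPairs n A ε).card : ℝ) ∧
        ∀ t ∈ schurPairs n A ε, t.1 + (t.2 - t.1) = t.2 := by
  obtain ⟨n₀, hn₀⟩ := exists_nat_gt (2 / ε)
  refine ⟨n₀, fun n hn A _ hpop => ⟨?_, fun t ht => Nat.add_sub_of_le
    (fst_le_snd_of_mem_schurPairs ht)⟩⟩
  have hεn : 2 ≤ ε * n := by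
    have : 2 / ε ≤ n := hn₀.le.trans (by exact_mod_cast hn)
    rw [div_le_iff₀ hε] at this
    linarith
  calc ε ^ 2 * n ^ 2 / 4 ≤ ε * n * (ε * n - 1) := by nlinarith
    _ ≤ #(popularDiffs n A ε) * (ε * n - 1) := by gcongr; linarith
    _ ≤ #(schurPairs n A ε) := card_popularDiffs_mul_le_card_schurPairs
end

section
/- Schur's theorem (finite version): for every r ≥ 1 there exists N such that for every n ≥ N and every r-colouring of [n] there exist x, y, z ∈ [n] of the same colour with x + y = z. -/
/-!
Colour the edge `{i < j}` of the complete graph on `[n]` by the colour of `j - i`. By Ramsey's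
theorem for triangles there are `a < b < k` with `b - a`, `k - b`, `k - a` of the same colour, and
`(b - a) + (k - b) = k - a`.

Ramsey's theorem is proved by induction on the number of colours: among the edges from the least
vertex some colour `cl` occurs more than `N` times; either an edge among those endpoints has
colour `cl`, closing a triangle, or they span a graph coloured without `cl`.
-/

open Finset

variable {α κ : Type*} [LinearOrder α]

def HasMonoTriangle (c : α → α → κ) (S : Finset α) : Prop :=
  ∃ a ∈ S, ∃ b ∈ S, ∃ k ∈ S, a < b ∧ b < k ∧ c a b = c b k ∧ c a b = c a k

lemma HasMonoTriangle.mono {c : α → α → κ} {S T : Finset α} (h : HasMonoTriangle c S)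
    (hST : S ⊆ T) : HasMonoTriangle c T := by
  obtain ⟨a, ha, b, hb, k, hk, h⟩ := h
  exact ⟨a, hST ha, b, hST hb, k, hST hk, h⟩

lemma hasMonoTriangle_insert_or_forall_ne {c : α → α → κ} {v : α} {U : Finset α} {cl : κ}
    (hvU : ∀ a ∈ U, v < a) (hcl : ∀ a ∈ U, c v a = cl) :
    HasMonoTriangle c (insert v U) ∨ ∀ a ∈ U, ∀ b ∈ U, a < b → c a b ≠ cl := by
  by_contra! ⟨hno, a, ha, b, hb, hab, habc⟩
  exact hno ⟨v, mem_insert_self v U, a, mem_insert_of_mem ha, b, mem_insert_of_mem hb,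
    hvU a ha, hab, by rw [hcl a ha, habc], by rw [hcl a ha, hcl b hb]⟩

lemma exists_hasMonoTriangle_of_card_colours_le [DecidableEq κ] (n : ℕ) :
    ∃ N, ∀ (C : Finset κ), #C ≤ n → ∀ (c : α → α → κ) (S : Finset α), N ≤ #S →
      (∀ a ∈ S, ∀ b ∈ S, a < b → c a b ∈ C) → HasMonoTriangle c S := by
  induction n with
  | zero =>
    refine ⟨2, fun C hC c S hS hcC => ?_⟩
    obtain ⟨a, ha, b, hb, hab⟩ := one_lt_card.mp (by omega : 1 < #S)
    rcases hab.lt_or_gt with hab | hab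
    · simpa [card_eq_zero.mp (Nat.le_zero.mp hC)] using hcC a ha b hb hab
    · simpa [card_eq_zero.mp (Nat.le_zero.mp hC)] using hcC b hb a ha hab
  | succ n ih =>
    obtain ⟨N, hN⟩ := ih
    refine ⟨(n + 1) * N + 2, fun C hC c S hS hcC => ?_⟩
    have hSne : S.Nonempty := card_pos.mp (by omega)
    set v := S.min' hSne
    have hvS : v ∈ S := S.min'_mem hSne
    have hT : (n + 1) * N < #(S.erase v) := by rw [card_erase_of_mem hvS]; omega
    obtain ⟨cl, hclC, hfiber⟩ := exists_lt_card_fiber_of_mul_lt_card_of_maps_to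
      (f := fun t => c v t) (t := C) (n := N)
      (fun a ha => hcC v hvS a (mem_of_mem_erase ha) (S.min'_lt_of_mem_erase_min' hSne ha))
      (lt_of_le_of_lt (Nat.mul_le_mul_right N hC) hT)
    set U := (S.erase v).filter (fun t => c v t = cl)
    have hUS : insert v U ⊆ S :=
      insert_subset hvS fun a ha => mem_of_mem_erase (mem_filter.mp ha).1
    have hvU : ∀ a ∈ U, v < a := fun a ha =>
      S.min'_lt_of_mem_erase_min' hSne (mem_filter.mp ha).1
    rcases hasMonoTriangle_insert_or_forall_ne hvU (fun a ha => (mem_filter.mp ha).2) with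
      h | hU
    · exact h.mono hUS
    · have hUC : ∀ a ∈ U, ∀ b ∈ U, a < b → c a b ∈ C.erase cl := fun a ha b hb hab =>
        mem_erase.mpr ⟨hU a ha b hb hab,
          hcC a (hUS (mem_insert_of_mem ha)) b (hUS (mem_insert_of_mem hb)) hab⟩
      exact (hN (C.erase cl) (by rw [card_erase_of_mem hclC]; omega) c U hfiber.le hUC).mono
        ((subset_insert v U).trans hUS)

theorem exists_hasMonoTriangle [Finite κ] :
    ∃ N, ∀ (c : α → α → κ) (S : Finset α), N ≤ #S → HasMonoTriangle c S := by
  classical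
  have := Fintype.ofFinite κ
  obtain ⟨N, hN⟩ := exists_hasMonoTriangle_of_card_colours_le (α := α) (κ := κ) (Fintype.card κ)
  exact ⟨N, fun c S hS => hN univ le_rfl c S hS fun _ _ _ _ _ => mem_univ _⟩

theorem stmt_9_general (r : ℕ) :
    ∃ N : ℕ, ∀ n : ℕ, N ≤ n → ∀ f : ℕ → Fin r,
      ∃ x ∈ Finset.Icc 1 n, ∃ y ∈ Finset.Icc 1 n, ∃ z ∈ Finset.Icc 1 n,
        f x = f y ∧ f y = f z ∧ x + y = z := by
  obtain ⟨N, hN⟩ := exists_hasMonoTriangle (α := ℕ) (κ := Fin r)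
  refine ⟨N, fun n hn f => ?_⟩
  obtain ⟨a, ha, b, hb, k, hk, hab, hbk, h₁, h₂⟩ :=
    hN (fun i j => f (j - i)) (Icc 1 n) (by rwa [Nat.card_Icc, Nat.add_sub_cancel])
  simp only [mem_Icc] at ha hb hk ⊢
  exact ⟨b - a, by omega, k - b, by omega, k - a, by omega, h₁, h₁.symm.trans h₂, by omega⟩

/-- Schur's theorem, finite version. -/
theorem stmt_9 (r : ℕ) (hr : 1 ≤ r) :
    ∃ N : ℕ, ∀ n : ℕ, N ≤ n → ∀ f : ℕ → Fin r,
      ∃ x ∈ Finset.Icc 1 n, ∃ y ∈ Finset.Icc 1 n, ∃ z ∈ Finset.Icc 1 n,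
        f x = f y ∧ f y = f z ∧ x + y = z :=
  stmt_9_general r
end
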